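/- For all positive integers t and k with 2^t dividing k, and all n, g(n, k, (3^{t−1}/4^t)·k² + (3^{t−1}+1)/2) > (n/(8·k/2^t))^{1 + 1/(2^t − 1)} whenever n > 1. -/

import Mathlib

open scoped ENNReal
/-- The set of distinct positive differences of a finite set `S ⊆ ℝ`:
`S − S = {|a − b| : a, b ∈ S, a ≠ b}`. -/
noncomputable def diffSet (S : Finset ℝ) : Finset ℝ :=
  ((S ×ˢ S).filter (fun p => p.1 ≠ p.2)).image (fun p => |p.1 - p.2|)

/-- `A` satisfies the `(k,ℓ)`-local property: every `k`-element subset of `A`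
has at least `ℓ` distinct positive differences. -/
def HasLocalProperty (A : Finset ℝ) (k ℓ : ℕ) : Prop :=
  ∀ A' ⊆ A, A'.card = k → ℓ ≤ (diffSet A').card

/-- `g n k ℓ` is the minimum of `|A − A|` over `n`-element sets `A ⊆ ℝ` satisfying the
`(k,ℓ)`-local property (`⊤`, i.e. `+∞`, if no such set exists). -/
noncomputable def g (n k ℓ : ℕ) : ℕ∞ :=
  sInf {d : ℕ∞ | ∃ A : Finset ℝ, A.card = n ∧ HasLocalProperty A k ℓ ∧
    ((diffSet A).card : ℕ∞) = d}

lemma mem_diffSet {S : Finset ℝ} {x : ℝ} :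
    x ∈ diffSet S ↔ ∃ a ∈ S, ∃ b ∈ S, a ≠ b ∧ |a - b| = x := by
  constructor
  · intro hx
    obtain ⟨p, hp, hpx⟩ := Finset.mem_image.1 hx
    rw [Finset.mem_filter, Finset.mem_product] at hp
    exact ⟨p.1, hp.1.1, p.2, hp.1.2, hp.2, hpx⟩
  · rintro ⟨a, ha, b, hb, hne, hx⟩
    exact Finset.mem_image.2 ⟨⟨a, b⟩, Finset.mem_filter.2
      ⟨Finset.mem_product.2 ⟨ha, hb⟩, hne⟩, hx⟩

lemma abs_sub_mem_diffSet {S : Finset ℝ} {a b : ℝ} (ha : a ∈ S) (hb : b ∈ S) (hne : a ≠ b) :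
    |a - b| ∈ diffSet S :=
  mem_diffSet.2 ⟨a, ha, b, hb, hne, rfl⟩

lemma diffSet_mono {S T : Finset ℝ} (h : S ⊆ T) : diffSet S ⊆ diffSet T := by
  intro x hx
  obtain ⟨a, ha, b, hb, hne, hx⟩ := mem_diffSet.1 hx
  exact mem_diffSet.2 ⟨a, h ha, b, h hb, hne, hx⟩

lemma diffSet_pos {S : Finset ℝ} {x : ℝ} (hx : x ∈ diffSet S) : 0 < x := by
  obtain ⟨a, _, b, _, hne, hx⟩ := mem_diffSet.1 hx
  rw [← hx]
  exact abs_pos.2 (sub_ne_zero.2 hne)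

lemma one_le_card_diffSet {S : Finset ℝ} (h : 2 ≤ S.card) : 1 ≤ (diffSet S).card := by
  obtain ⟨a, ha, b, hb, hne⟩ := Finset.one_lt_card.1 h
  exact Finset.card_pos.2 ⟨_, abs_sub_mem_diffSet ha hb hne⟩

lemma diffSet_subset_image_lt (X : Finset ℝ) :
    diffSet X ⊆ ((X ×ˢ X).filter (fun p => p.1 < p.2)).image (fun p => |p.1 - p.2|) := by
  intro x hx
  obtain ⟨a, ha, b, hb, hne, hx⟩ := mem_diffSet.1 hx
  rcases hne.lt_or_gt with hlt | hlt
  · exact Finset.mem_image.2 ⟨⟨a, b⟩, Finset.mem_filter.2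
      ⟨Finset.mem_product.2 ⟨ha, hb⟩, hlt⟩, hx⟩
  · refine Finset.mem_image.2 ⟨⟨b, a⟩, Finset.mem_filter.2
      ⟨Finset.mem_product.2 ⟨hb, ha⟩, hlt⟩, ?_⟩
    rw [abs_sub_comm]; exact hx

lemma two_mul_filter_lt_card_add (X : Finset ℝ) :
    2 * ((X ×ˢ X).filter (fun p => p.1 < p.2)).card + X.card = X.card ^ 2 := by
  classical
  have hswap : ((X ×ˢ X).filter (fun p => p.1 < p.2)).card
      = ((X ×ˢ X).filter (fun p => p.2 < p.1)).card := by
    apply Finset.card_bij (fun p _ => (p.2, p.1))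
    · rintro ⟨a, b⟩ hp
      simp only [Finset.mem_filter, Finset.mem_product] at hp ⊢
      exact ⟨⟨hp.1.2, hp.1.1⟩, hp.2⟩
    · rintro ⟨a, b⟩ _ ⟨c, d⟩ _ h
      simpa [Prod.ext_iff, and_comm] using h
    · rintro ⟨a, b⟩ hp
      simp only [Finset.mem_filter, Finset.mem_product] at hp
      exact ⟨(b, a), Finset.mem_filter.2 ⟨Finset.mem_product.2 ⟨hp.1.2, hp.1.1⟩, hp.2⟩, rfl⟩
  have hdiag : ((X ×ˢ X).filter (fun p => p.1 = p.2)).card = X.card := by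
    apply Finset.card_bij (fun p _ => p.1)
    · rintro ⟨a, b⟩ hp
      simp only [Finset.mem_filter, Finset.mem_product] at hp
      exact hp.1.1
    · rintro ⟨a, b⟩ ha ⟨c, d⟩ hc h
      simp only [Finset.mem_filter, Finset.mem_product] at ha hc
      simp only at h
      simp only [Prod.ext_iff]
      exact ⟨h, by rw [← ha.2, ← hc.2, h]⟩
    · intro a ha
      exact ⟨(a, a), Finset.mem_filter.2 ⟨Finset.mem_product.2 ⟨ha, ha⟩, rfl⟩, rfl⟩
  have hsplit1 : ((X ×ˢ X).filter (fun p => p.1 < p.2)).card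
      + ((X ×ˢ X).filter (fun p => ¬ p.1 < p.2)).card = (X ×ˢ X).card :=
    Finset.card_filter_add_card_filter_not _
  have hsplit2 : ((X ×ˢ X).filter (fun p => ¬ p.1 < p.2)).card
      = ((X ×ˢ X).filter (fun p => p.2 < p.1)).card
        + ((X ×ˢ X).filter (fun p => p.1 = p.2)).card := by
    rw [← Finset.card_union_of_disjoint]
    · congr 1
      ext ⟨a, b⟩
      simp only [Finset.mem_filter, Finset.mem_union, Finset.mem_product, not_lt]
      constructor
      · rintro ⟨⟨ha, hb⟩, hle⟩
        rcases hle.lt_or_eq with h | h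
        · exact Or.inl ⟨⟨ha, hb⟩, h⟩
        · exact Or.inr ⟨⟨ha, hb⟩, h.symm⟩
      · rintro (⟨⟨ha, hb⟩, h⟩ | ⟨⟨ha, hb⟩, h⟩)
        · exact ⟨⟨ha, hb⟩, h.le⟩
        · exact ⟨⟨ha, hb⟩, h.ge⟩
    · rw [Finset.disjoint_left]
      rintro ⟨a, b⟩ h1 h2
      simp only [Finset.mem_filter] at h1 h2
      exact absurd h2.2 h1.2.ne'
  have hprod : (X ×ˢ X).card = X.card ^ 2 := by rw [Finset.card_product, sq]
  omega

lemma filter_le_card_eq (X : Finset ℝ) :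
    ((X ×ˢ X).filter (fun p => p.1 ≤ p.2)).card
      = ((X ×ˢ X).filter (fun p => p.1 < p.2)).card + X.card := by
  classical
  have hdiag : ((X ×ˢ X).filter (fun p => p.1 = p.2)).card = X.card := by
    apply Finset.card_bij (fun p _ => p.1)
    · rintro ⟨a, b⟩ hp
      simp only [Finset.mem_filter, Finset.mem_product] at hp
      exact hp.1.1
    · rintro ⟨a, b⟩ ha ⟨c, d⟩ hc h
      simp only [Finset.mem_filter, Finset.mem_product] at ha hc
      simp only at h
      simp only [Prod.ext_iff]
      exact ⟨h, by rw [← ha.2, ← hc.2, h]⟩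
    · intro a ha
      exact ⟨(a, a), Finset.mem_filter.2 ⟨Finset.mem_product.2 ⟨ha, ha⟩, rfl⟩, rfl⟩
  rw [← hdiag, ← Finset.card_union_of_disjoint]
  · congr 1
    ext ⟨a, b⟩
    simp only [Finset.mem_filter, Finset.mem_union, Finset.mem_product]
    constructor
    · rintro ⟨⟨ha, hb⟩, hle⟩
      rcases hle.lt_or_eq with h | h
      · exact Or.inl ⟨⟨ha, hb⟩, h⟩
      · exact Or.inr ⟨⟨ha, hb⟩, h⟩
    · rintro (⟨⟨ha, hb⟩, h⟩ | ⟨⟨ha, hb⟩, h⟩)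
      · exact ⟨⟨ha, hb⟩, h.le⟩
      · exact ⟨⟨ha, hb⟩, h.le⟩
  · rw [Finset.disjoint_left]
    rintro ⟨a, b⟩ h1 h2
    simp only [Finset.mem_filter] at h1 h2
    exact absurd h2.2 h1.2.ne
lemma exists_alternating (δ : ℝ) (hδ : 0 < δ) (E : Finset ℝ) :
    ∃ M ⊆ E, E.card ≤ 2 * M.card ∧ ∀ x ∈ M, x + δ ∉ M := by
  classical
  induction E using Finset.strongInduction with
  | _ E ih =>
    rcases E.eq_empty_or_nonempty with rfl | hne
    · exact ⟨∅, Finset.Subset.refl _, by simp, by simp⟩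
    · set a := E.min' hne with ha
      set E' := (E.erase a).erase (a + δ) with hE'
      have hss : E' ⊂ E := by
        refine Finset.ssubset_of_subset_of_ssubset ?_ (Finset.erase_ssubset (E.min'_mem hne))
        exact Finset.erase_subset _ _
      obtain ⟨M', hM'sub, hM'card, hM'alt⟩ := ih E' hss
      have haM' : a ∉ M' := fun h => Finset.notMem_erase a _ (Finset.erase_subset _ _ (hM'sub h))
      refine ⟨insert a M', ?_, ?_, ?_⟩
      · intro x hx
        rcases Finset.mem_insert.1 hx with rfl | hx
        · exact E.min'_mem hne
        · exact (Finset.erase_subset _ _) ((Finset.erase_subset _ _) (hM'sub hx))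
      · have h1 : (E.erase a).card = E.card - 1 := Finset.card_erase_of_mem (E.min'_mem hne)
        have h2 : (E.erase a).card - 1 ≤ E'.card := Finset.pred_card_le_card_erase
        have h3 : (insert a M').card = M'.card + 1 := Finset.card_insert_of_notMem haM'
        have h4 : 1 ≤ E.card := Finset.card_pos.2 hne
        omega
      · intro x hx hx'
        rcases Finset.mem_insert.1 hx with rfl | hxM'
        · rcases Finset.mem_insert.1 hx' with h | h
          · exact absurd h (by intro h; nlinarith [hδ])
          · exact Finset.notMem_erase (a + δ) _ (hM'sub h)
        · rcases Finset.mem_insert.1 hx' with h | h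
          · -- x + δ = a, but x ∈ E and x = a - δ < a = min
            have hxE : x ∈ E := (Finset.erase_subset _ _) ((Finset.erase_subset _ _) (hM'sub hxM'))
            have : a ≤ x := E.min'_le x hxE
            have : x < a := by rw [← h]; linarith
            linarith
          · exact hM'alt x hxM' h

lemma exists_popular_diff (A : Finset ℝ) (h2 : 2 ≤ A.card) :
    ∃ δ ∈ diffSet A,
      A.card * A.card - A.card
        ≤ (diffSet A).card * (2 * (A.filter (fun a => a + δ ∈ A)).card) := by
  classical
  have hmaps : ∀ p ∈ A.offDiag, |p.1 - p.2| ∈ diffSet A := by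
    rintro ⟨x, y⟩ hp
    rw [Finset.mem_offDiag] at hp
    exact abs_sub_mem_diffSet hp.1 hp.2.1 hp.2.2
  have hsum : A.offDiag.card
      = ∑ δ ∈ diffSet A, (A.offDiag.filter (fun p => |p.1 - p.2| = δ)).card :=
    Finset.card_eq_sum_card_fiberwise hmaps
  have hfiber : ∀ δ ∈ diffSet A,
      (A.offDiag.filter (fun p => |p.1 - p.2| = δ)).card
        ≤ 2 * (A.filter (fun a => a + δ ∈ A)).card := by
    intro δ hδmem
    have hδpos : 0 < δ := diffSet_pos hδmem
    set F := A.offDiag.filter (fun p => |p.1 - p.2| = δ) with hF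
    have hsplit : (F.filter (fun p => p.1 < p.2)).card
        + (F.filter (fun p => ¬ p.1 < p.2)).card = F.card :=
      Finset.card_filter_add_card_filter_not _
    have key1 : ∀ p ∈ F, p.1 < p.2 → p.2 = p.1 + δ := by
      rintro ⟨x, y⟩ hp hlt
      simp only [hF, Finset.mem_filter] at hp
      have := hp.2
      rw [abs_of_neg (by simpa using sub_neg.2 hlt)] at this
      simp only at this ⊢
      linarith
    have key2 : ∀ p ∈ F, ¬ p.1 < p.2 → p.1 = p.2 + δ := by
      rintro ⟨x, y⟩ hp hle
      simp only [hF, Finset.mem_filter, Finset.mem_offDiag] at hp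
      have hlt : y < x := lt_of_le_of_ne (not_lt.1 hle) (Ne.symm hp.1.2.2)
      have := hp.2
      rw [abs_of_pos (by simpa using sub_pos.2 hlt)] at this
      simp only at this ⊢
      linarith
    have c1 : (F.filter (fun p => p.1 < p.2)).card ≤ (A.filter (fun a => a + δ ∈ A)).card := by
      apply Finset.card_le_card_of_injOn (fun p => p.1)
      · rintro ⟨x, y⟩ hp
        have hpF := Finset.mem_filter.1 hp
        have heq := key1 _ hpF.1 hpF.2
        simp only [hF, Finset.mem_filter, Finset.mem_offDiag] at hpF
        simp only at heq
        refine Finset.mem_filter.2 ⟨hpF.1.1.1, ?_⟩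
        rw [← heq]; exact hpF.1.1.2.1
      · rintro ⟨x, y⟩ hp ⟨x', y'⟩ hp' hxy
        have hpF := Finset.mem_filter.1 hp
        have hpF' := Finset.mem_filter.1 hp'
        have heq := key1 _ hpF.1 hpF.2
        have heq' := key1 _ hpF'.1 hpF'.2
        simp only at heq heq' hxy
        simp [Prod.ext_iff, hxy, heq, heq']
    have c2 : (F.filter (fun p => ¬ p.1 < p.2)).card
        ≤ (A.filter (fun a => a + δ ∈ A)).card := by
      apply Finset.card_le_card_of_injOn (fun p => p.2)
      · rintro ⟨x, y⟩ hp
        have hpF := Finset.mem_filter.1 hp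
        have heq := key2 _ hpF.1 hpF.2
        simp only [hF, Finset.mem_filter, Finset.mem_offDiag] at hpF
        simp only at heq
        refine Finset.mem_filter.2 ⟨hpF.1.1.2.1, ?_⟩
        rw [← heq]; exact hpF.1.1.1
      · rintro ⟨x, y⟩ hp ⟨x', y'⟩ hp' hxy
        have hpF := Finset.mem_filter.1 hp
        have hpF' := Finset.mem_filter.1 hp'
        have heq := key2 _ hpF.1 hpF.2
        have heq' := key2 _ hpF'.1 hpF'.2
        simp only at heq heq' hxy
        simp [Prod.ext_iff, hxy, heq, heq']
    omega
  have hne : (diffSet A).Nonempty := Finset.card_pos.1 (one_le_card_diffSet h2)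
  have havg : ∃ δ ∈ diffSet A, A.offDiag.card
      ≤ (diffSet A).card * (A.offDiag.filter (fun p => |p.1 - p.2| = δ)).card := by
    by_contra hcon
    push_neg at hcon
    have : ∑ δ ∈ diffSet A, (A.offDiag.filter (fun p => |p.1 - p.2| = δ)).card * (diffSet A).card
        < ∑ δ ∈ diffSet A, A.offDiag.card := by
      apply Finset.sum_lt_sum_of_nonempty hne
      intro δ hδ
      have := hcon δ hδ
      calc (A.offDiag.filter (fun p => |p.1 - p.2| = δ)).card * (diffSet A).card
          = (diffSet A).card * (A.offDiag.filter (fun p => |p.1 - p.2| = δ)).card := by ring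
        _ < A.offDiag.card := this
    rw [← Finset.sum_mul, ← hsum, Finset.sum_const, smul_eq_mul] at this
    rw [mul_comm] at this
    exact lt_irrefl _ this
  obtain ⟨δ, hδmem, hδ⟩ := havg
  refine ⟨δ, hδmem, ?_⟩
  have := hfiber δ hδmem
  have hoff : A.offDiag.card = A.card * A.card - A.card := Finset.offDiag_card A
  calc A.card * A.card - A.card = A.offDiag.card := hoff.symm
    _ ≤ (diffSet A).card * (A.offDiag.filter (fun p => |p.1 - p.2| = δ)).card := hδ
    _ ≤ (diffSet A).card * (2 * (A.filter (fun a => a + δ ∈ A)).card) :=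
        Nat.mul_le_mul_left _ this
lemma card_diffSet_union_translate (B : Finset ℝ) (δ : ℝ) (hδ : 0 < δ) :
    (diffSet (B ∪ B.image (fun b => b + δ))).card ≤ 3 * (diffSet B).card + 1 := by
  classical
  set S := diffSet B with hS
  have hsub : diffSet (B ∪ B.image (fun b => b + δ))
      ⊆ (S ∪ S.image (fun e => e + δ)) ∪ (S.image (fun e => |e - δ|) ∪ {δ}) := by
    intro x hx
    obtain ⟨u, hu, w, hw, hne, hx⟩ := mem_diffSet.1 hx
    -- helper for the mixed case: u ∈ B, w = b' + δ
    have mixed : ∀ u b' : ℝ, u ∈ B → b' ∈ B →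
        |u - (b' + δ)| ∈ (S ∪ S.image (fun e => e + δ)) ∪ (S.image (fun e => |e - δ|) ∪ {δ}) := by
      intro a b haB hbB
      rcases eq_or_ne a b with rfl | hab
      · have : |a - (a + δ)| = δ := by
          rw [abs_of_neg (by linarith : a - (a + δ) < 0)]; ring
        rw [this]
        exact Finset.mem_union.2 (Or.inr (Finset.mem_union.2 (Or.inr
          (Finset.mem_singleton_self δ))))
      · rcases hab.lt_or_gt with h | h
        · -- a < b : |a - b - δ| = (b - a) + δ
          have he : |a - b| ∈ S := abs_sub_mem_diffSet haB hbB hab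
          have : |a - (b + δ)| = |a - b| + δ := by
            rw [abs_of_neg (by linarith : a - b < 0), abs_of_neg (by linarith : a - (b + δ) < 0)]
            ring
          rw [this]
          exact Finset.mem_union.2 (Or.inl (Finset.mem_union.2 (Or.inr
            (Finset.mem_image.2 ⟨_, he, rfl⟩))))
        · -- b < a : |a - b - δ| = ||a-b| - δ|
          have he : |a - b| ∈ S := abs_sub_mem_diffSet haB hbB hab
          have : |a - (b + δ)| = abs (|a - b| - δ) := by
            rw [abs_of_pos (by linarith : (0:ℝ) < a - b)]
            congr 1; ring
          rw [this]
          exact Finset.mem_union.2 (Or.inr (Finset.mem_union.2 (Or.inl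
            (Finset.mem_image.2 ⟨_, he, rfl⟩))))
    rcases Finset.mem_union.1 hu with huB | huI <;> rcases Finset.mem_union.1 hw with hwB | hwI
    · exact Finset.mem_union.2 (Or.inl (Finset.mem_union.2 (Or.inl
        (hx ▸ abs_sub_mem_diffSet huB hwB hne))))
    · obtain ⟨b', hb', rfl⟩ := Finset.mem_image.1 hwI
      exact hx ▸ mixed u b' huB hb'
    · obtain ⟨b, hb, rfl⟩ := Finset.mem_image.1 huI
      rw [← hx, abs_sub_comm]
      exact mixed w b hwB hb
    · obtain ⟨b, hb, rfl⟩ := Finset.mem_image.1 huI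
      obtain ⟨b', hb', rfl⟩ := Finset.mem_image.1 hwI
      have hbb' : b ≠ b' := fun h => hne (by rw [h])
      have : b + δ - (b' + δ) = b - b' := by ring
      rw [← hx, this]
      exact Finset.mem_union.2 (Or.inl (Finset.mem_union.2 (Or.inl
        (abs_sub_mem_diffSet hb hb' hbb'))))
  calc (diffSet (B ∪ B.image (fun b => b + δ))).card
      ≤ ((S ∪ S.image (fun e => e + δ)) ∪ (S.image (fun e => |e - δ|) ∪ {δ})).card :=
        Finset.card_le_card hsub
    _ ≤ (S ∪ S.image (fun e => e + δ)).card + (S.image (fun e => |e - δ|) ∪ {δ}).card :=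
        Finset.card_union_le _ _
    _ ≤ (S.card + (S.image (fun e => e + δ)).card)
        + ((S.image (fun e => |e - δ|)).card + ({δ} : Finset ℝ).card) :=
        Nat.add_le_add (Finset.card_union_le _ _) (Finset.card_union_le _ _)
    _ ≤ (S.card + S.card) + (S.card + 1) := by
        refine Nat.add_le_add (Nat.add_le_add_left (Finset.card_image_le) _)
          (Nat.add_le_add (Finset.card_image_le) ?_)
        simp
    _ = 3 * S.card + 1 := by ring
lemma exists_popular_sum (s : ℕ) (hs : 1 ≤ s) (A : Finset ℝ) (h2 : 2 ≤ A.card)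
    (h : (8 * s) ^ 2 * (diffSet A).card ≤ A.card ^ 2) :
    ∃ v : ℝ, 2 * s ≤ ((A ×ˢ A).filter (fun p => p.1 + p.2 = v)).card := by
  classical
  by_contra hno
  push_neg at hno
  set n := A.card with hn
  set D := (diffSet A).card with hD
  set T := A ×ˢ A with hT
  have hTcard : T.card = n ^ 2 := by rw [hT, Finset.card_product, sq]
  set V := T.image (fun p => p.1 - p.2) with hV
  have hVcard : V.card ≤ 2 * D + 1 := by
    have hsub : V ⊆ insert 0 (diffSet A ∪ (diffSet A).image (fun x => -x)) := by
      intro x hx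
      obtain ⟨⟨a, b⟩, hab, rfl⟩ := Finset.mem_image.1 hx
      rw [hT, Finset.mem_product] at hab
      rcases lt_trichotomy a b with hlt | rfl | hlt
      · refine Finset.mem_insert.2 (Or.inr (Finset.mem_union.2 (Or.inr
          (Finset.mem_image.2 ⟨|a - b|, abs_sub_mem_diffSet hab.1 hab.2 hlt.ne, ?_⟩))))
        rw [abs_of_neg (by simpa using sub_neg.2 hlt)]
        simp
      · simp
      · refine Finset.mem_insert.2 (Or.inr (Finset.mem_union.2 (Or.inl ?_)))
        have := abs_sub_mem_diffSet hab.1 hab.2 hlt.ne'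
        rwa [abs_of_pos (by simpa using sub_pos.2 hlt)] at this
    calc V.card ≤ _ := Finset.card_le_card hsub
      _ ≤ (diffSet A ∪ (diffSet A).image (fun x => -x)).card + 1 := Finset.card_insert_le _ _
      _ ≤ ((diffSet A).card + ((diffSet A).image (fun x => -x)).card) + 1 :=
          Nat.add_le_add_right (Finset.card_union_le _ _) _
      _ ≤ (D + D) + 1 := Nat.add_le_add_right (Nat.add_le_add_left Finset.card_image_le _) _
      _ = 2 * D + 1 := by ring
  have hmapsV : ∀ p ∈ T, p.1 - p.2 ∈ V := fun p hp => Finset.mem_image_of_mem _ hp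
  have hsumfib : T.card = ∑ v ∈ V, (T.filter (fun p => p.1 - p.2 = v)).card :=
    Finset.card_eq_sum_card_fiberwise hmapsV
  set Q := (T ×ˢ T).filter (fun pq => pq.1.1 - pq.1.2 = pq.2.1 - pq.2.2) with hQdef
  have hQ : Q.card = ∑ v ∈ V, (T.filter (fun p => p.1 - p.2 = v)).card ^ 2 := by
    have hm : ∀ pq ∈ Q, pq.1.1 - pq.1.2 ∈ V := by
      rintro ⟨p, q⟩ hpq
      rw [hQdef, Finset.mem_filter, Finset.mem_product] at hpq
      exact hmapsV p hpq.1.1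
    rw [Finset.card_eq_sum_card_fiberwise hm]
    refine Finset.sum_congr rfl fun v _ => ?_
    have : Q.filter (fun pq => pq.1.1 - pq.1.2 = v)
        = (T.filter (fun p => p.1 - p.2 = v)) ×ˢ (T.filter (fun p => p.1 - p.2 = v)) := by
      ext ⟨p, q⟩
      simp only [hQdef, Finset.mem_filter, Finset.mem_product]
      constructor
      · rintro ⟨⟨⟨hp, hq⟩, heq⟩, hv⟩
        exact ⟨⟨hp, hv⟩, ⟨hq, by rw [← heq]; exact hv⟩⟩
      · rintro ⟨⟨hp, hv⟩, ⟨hq, hv'⟩⟩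
        exact ⟨⟨⟨hp, hq⟩, by rw [hv, hv']⟩, hv⟩
    rw [this, Finset.card_product, sq]
  set Q' := (T ×ˢ T).filter (fun pq => pq.1.1 + pq.1.2 = pq.2.1 + pq.2.2) with hQ'def
  have hQQ' : Q.card = Q'.card := by
    refine Finset.card_bij' (fun pq _ => ((pq.1.1, pq.2.2), (pq.2.1, pq.1.2)))
      (fun pq _ => ((pq.1.1, pq.2.2), (pq.2.1, pq.1.2))) ?_ ?_ ?_ ?_
    · rintro ⟨⟨a, b⟩, ⟨c, d⟩⟩ hpq
      simp only [hQdef, hQ'def, hT, Finset.mem_filter, Finset.mem_product] at hpq ⊢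
      obtain ⟨⟨⟨ha, hb⟩, ⟨hc, hd⟩⟩, heq⟩ := hpq
      exact ⟨⟨⟨ha, hd⟩, ⟨hc, hb⟩⟩, by linarith⟩
    · rintro ⟨⟨a, b⟩, ⟨c, d⟩⟩ hpq
      simp only [hQdef, hQ'def, hT, Finset.mem_filter, Finset.mem_product] at hpq ⊢
      obtain ⟨⟨⟨ha, hb⟩, ⟨hc, hd⟩⟩, heq⟩ := hpq
      exact ⟨⟨⟨ha, hd⟩, ⟨hc, hb⟩⟩, by linarith⟩
    · rintro ⟨⟨a, b⟩, ⟨c, d⟩⟩ _; rfl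
    · rintro ⟨⟨a, b⟩, ⟨c, d⟩⟩ _; rfl
  have hQ'sum : Q'.card = ∑ p ∈ T, (T.filter (fun q => q.1 + q.2 = p.1 + p.2)).card := by
    have hm : ∀ pq ∈ Q', pq.1 ∈ T := by
      rintro ⟨p, q⟩ hpq
      rw [hQ'def, Finset.mem_filter, Finset.mem_product] at hpq
      exact hpq.1.1
    rw [Finset.card_eq_sum_card_fiberwise hm]
    refine Finset.sum_congr rfl fun p hp => ?_
    apply Finset.card_bij (fun pq _ => pq.2)
    · rintro ⟨p', q⟩ hpq
      simp only [hQ'def, Finset.mem_filter, Finset.mem_product] at hpq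
      obtain ⟨⟨⟨hp', hq⟩, heq⟩, hfst⟩ := hpq
      subst hfst
      exact Finset.mem_filter.2 ⟨hq, by linarith⟩
    · rintro ⟨p1, q1⟩ h1 ⟨p2, q2⟩ h2 hq
      simp only [Finset.mem_filter] at h1 h2
      simp only at hq
      simp [Prod.ext_iff, hq, h1.2, h2.2]
    · intro q hq
      rw [Finset.mem_filter] at hq
      refine ⟨(p, q), Finset.mem_filter.2 ⟨Finset.mem_filter.2 ⟨Finset.mem_product.2
        ⟨hp, hq.1⟩, hq.2.symm⟩, rfl⟩, rfl⟩
  have hQ'le : Q'.card ≤ n ^ 2 * (2 * s - 1) := by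
    rw [hQ'sum]
    calc ∑ p ∈ T, (T.filter (fun q => q.1 + q.2 = p.1 + p.2)).card
        ≤ ∑ _p ∈ T, (2 * s - 1) := by
          refine Finset.sum_le_sum fun p _ => ?_
          have := hno (p.1 + p.2)
          omega
      _ = n ^ 2 * (2 * s - 1) := by rw [Finset.sum_const, smul_eq_mul, hTcard]
  have hCS : (T.card) ^ 2 ≤ V.card * Q.card := by
    rw [hQ, hsumfib]
    exact sq_sum_le_card_mul_sum_sq
  -- final contradiction, in ℕ via explicit chain
  have hD1 : 1 ≤ D := one_le_card_diffSet h2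
  have hn8s : 8 * s ≤ n := by
    have h1 : (8 * s) ^ 2 * 1 ≤ n ^ 2 := le_trans (Nat.mul_le_mul_left _ hD1) h
    rw [mul_one] at h1
    exact (pow_le_pow_iff_left₀ (Nat.zero_le _) (Nat.zero_le _) two_ne_zero).1 h1
  have hchain : n ^ 2 * n ^ 2 ≤ (2 * D + 1) * (n ^ 2 * (2 * s - 1)) := by
    calc n ^ 2 * n ^ 2 = (n ^ 2) ^ 2 := by ring
      _ = T.card ^ 2 := by rw [hTcard]
      _ ≤ V.card * Q.card := hCS
      _ ≤ (2 * D + 1) * Q.card := Nat.mul_le_mul_right _ hVcard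
      _ = (2 * D + 1) * Q'.card := by rw [hQQ']
      _ ≤ (2 * D + 1) * (n ^ 2 * (2 * s - 1)) := Nat.mul_le_mul_left _ hQ'le
  have hlt : (2 * D + 1) * (2 * s - 1) < n ^ 2 := by
    have hsD : (2 * D + 1) * (2 * s - 1) ≤ 6 * (s * D) := by
      have h1 : 2 * D + 1 ≤ 3 * D := by omega
      have h2 : 2 * s - 1 ≤ 2 * s := by omega
      calc (2 * D + 1) * (2 * s - 1) ≤ (3 * D) * (2 * s) := Nat.mul_le_mul h1 h2
        _ = 6 * (s * D) := by ring
    have h64 : 64 * (s * s * D) ≤ n ^ 2 := by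
      calc 64 * (s * s * D) = (8 * s) ^ 2 * D := by ring
        _ ≤ n ^ 2 := h
    have hsD1 : 1 ≤ s * D := Nat.one_le_iff_ne_zero.2 (by positivity)
    have h6 : 6 * (s * D) < 64 * s * (s * D) := by
      apply Nat.mul_lt_mul_of_lt_of_le _ (le_refl _) hsD1
      omega
    have h64' : 64 * s * (s * D) = 64 * (s * s * D) := by ring
    omega
  have hn2 : 0 < n ^ 2 := by positivity
  have := calc n ^ 2 * n ^ 2 ≤ (2 * D + 1) * (n ^ 2 * (2 * s - 1)) := hchain
    _ = n ^ 2 * ((2 * D + 1) * (2 * s - 1)) := by ring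
    _ < n ^ 2 * n ^ 2 := by exact mul_lt_mul_of_pos_left hlt hn2
  exact lt_irrefl _ this
lemma base_case (s : ℕ) (hs : 1 ≤ s) (A : Finset ℝ) (h2 : 2 ≤ A.card)
    (h : (8 * s) ^ 2 * (diffSet A).card ≤ A.card ^ 2) :
    ∃ B ⊆ A, B.card = 2 * s ∧ (diffSet B).card ≤ s ^ 2 := by
  classical
  obtain ⟨v, hv⟩ := exists_popular_sum s hs A h2 h
  set Y := A.filter (fun a => v - a ∈ A) with hY
  have hYcard : ((A ×ˢ A).filter (fun p => p.1 + p.2 = v)).card = Y.card := by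
    apply Finset.card_bij (fun p _ => p.1)
    · rintro ⟨a, b⟩ hp
      rw [Finset.mem_filter, Finset.mem_product] at hp
      refine Finset.mem_filter.2 ⟨hp.1.1, ?_⟩
      have : v - a = b := by have := hp.2; simp only at this; linarith
      rw [this]; exact hp.1.2
    · rintro ⟨a, b⟩ ha ⟨c, d⟩ hc hac
      rw [Finset.mem_filter] at ha hc
      simp only at hac
      have hb : b = v - a := by have := ha.2; simp only at this; linarith
      have hd : d = v - c := by have := hc.2; simp only at this; linarith
      simp [Prod.ext_iff, hac, hb, hd]
    · intro a ha
      rw [hY, Finset.mem_filter] at ha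
      exact ⟨(a, v - a), Finset.mem_filter.2 ⟨Finset.mem_product.2 ⟨ha.1, ha.2⟩, by ring⟩, rfl⟩
  rw [hYcard] at hv
  -- the lower half of Y
  set X₀ := Y.filter (fun y => y < v / 2) with hX₀
  have hX₀card : s ≤ X₀.card := by
    have hbij : (Y.filter (fun y => v / 2 < y)).card = X₀.card := by
      apply Finset.card_bij (fun y _ => v - y)
      · intro y hy
        rw [Finset.mem_filter] at hy
        obtain ⟨hyY, hyhalf⟩ := hy
        rw [hY, Finset.mem_filter] at hyY
        refine Finset.mem_filter.2 ⟨Finset.mem_filter.2 ⟨hyY.2, ?_⟩, by linarith⟩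
        simpa [sub_sub_cancel] using hyY.1
      · intro y1 h1 y2 h2 heq
        linarith [heq]
      · intro x hx
        rw [hX₀, Finset.mem_filter] at hx
        obtain ⟨hxY, hxhalf⟩ := hx
        rw [hY, Finset.mem_filter] at hxY
        refine ⟨v - x, Finset.mem_filter.2 ⟨Finset.mem_filter.2 ⟨hxY.2, ?_⟩, by linarith⟩, by ring⟩
        simpa [sub_sub_cancel] using hxY.1
    have hsplit : X₀.card + (Y.filter (fun y => ¬ y < v / 2)).card = Y.card := by
      rw [hX₀]; exact Finset.card_filter_add_card_filter_not _
    have hge : (Y.filter (fun y => ¬ y < v / 2)).card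
        ≤ (Y.filter (fun y => v / 2 < y)).card + 1 := by
      have hsub : Y.filter (fun y => ¬ y < v / 2)
          ⊆ insert (v / 2) (Y.filter (fun y => v / 2 < y)) := by
        intro y hy
        rw [Finset.mem_filter] at hy
        rcases (not_lt.1 hy.2).lt_or_eq with hlt | heq
        · exact Finset.mem_insert.2 (Or.inr (Finset.mem_filter.2 ⟨hy.1, hlt⟩))
        · exact Finset.mem_insert.2 (Or.inl heq.symm)
      calc (Y.filter (fun y => ¬ y < v / 2)).card ≤ _ := Finset.card_le_card hsub
        _ ≤ (Y.filter (fun y => v / 2 < y)).card + 1 := Finset.card_insert_le _ _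
    omega
  obtain ⟨X, hXsub, hXcard⟩ := Finset.exists_subset_card_eq hX₀card
  have hXlt : ∀ x ∈ X, x < v / 2 := fun x hx => (Finset.mem_filter.1 (hXsub hx)).2
  have hXY : X ⊆ Y := hXsub.trans (Finset.filter_subset _ _)
  have hXA : X ⊆ A := hXY.trans (Finset.filter_subset _ _)
  have hXrefl : ∀ x ∈ X, v - x ∈ A := by
    intro x hx
    exact (Finset.mem_filter.1 (hXY hx)).2
  set B := X ∪ X.image (fun x => v - x) with hB
  have hBA : B ⊆ A := by
    intro b hb
    rcases Finset.mem_union.1 hb with hb | hb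
    · exact hXA hb
    · obtain ⟨x, hx, rfl⟩ := Finset.mem_image.1 hb
      exact hXrefl x hx
  have himcard : (X.image (fun x => v - x)).card = X.card :=
    Finset.card_image_of_injective _ (fun a b hab => by linarith)
  have hdisj : Disjoint X (X.image (fun x => v - x)) := by
    rw [Finset.disjoint_left]
    intro x hx hx'
    obtain ⟨x', hx', heq⟩ := Finset.mem_image.1 hx'
    have h1 := hXlt x hx
    have h2 := hXlt x' hx'
    linarith [heq]
  have hBcard : B.card = 2 * s := by
    rw [hB, Finset.card_union_of_disjoint hdisj, himcard, hXcard]; ring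
  refine ⟨B, hBA, hBcard, ?_⟩
  -- counting differences of B
  set F := ((X ×ˢ X).filter (fun p => p.1 ≤ p.2)).image (fun p => |v - p.1 - p.2|) with hF
  have hsubs : diffSet B ⊆ diffSet X ∪ F := by
    intro z hz
    obtain ⟨a, ha, b, hb, hne, hzeq⟩ := mem_diffSet.1 hz
    have mixed : ∀ x x' : ℝ, x ∈ X → x' ∈ X → |x - (v - x')| ∈ F := by
      intro x x' hx hx'
      rcases le_total x x' with hle | hle
      · refine Finset.mem_image.2 ⟨(x, x'), Finset.mem_filter.2
          ⟨Finset.mem_product.2 ⟨hx, hx'⟩, hle⟩, ?_⟩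
        have hrw : x - (v - x') = -(v - x - x') := by ring
        rw [hrw, abs_neg]
      · refine Finset.mem_image.2 ⟨(x', x), Finset.mem_filter.2
          ⟨Finset.mem_product.2 ⟨hx', hx⟩, hle⟩, ?_⟩
        have hrw : x - (v - x') = -(v - x' - x) := by ring
        rw [hrw, abs_neg]
    rcases Finset.mem_union.1 ha with haX | haI <;> rcases Finset.mem_union.1 hb with hbX | hbI
    · exact Finset.mem_union.2 (Or.inl (hzeq ▸ abs_sub_mem_diffSet haX hbX hne))
    · obtain ⟨x', hx', rfl⟩ := Finset.mem_image.1 hbI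
      exact Finset.mem_union.2 (Or.inr (hzeq ▸ mixed a x' haX hx'))
    · obtain ⟨x, hx, rfl⟩ := Finset.mem_image.1 haI
      rw [← hzeq, abs_sub_comm]
      exact Finset.mem_union.2 (Or.inr (mixed b x hbX hx))
    · obtain ⟨x, hx, rfl⟩ := Finset.mem_image.1 haI
      obtain ⟨x', hx', rfl⟩ := Finset.mem_image.1 hbI
      have hxx' : x' ≠ x := fun hh => hne (by rw [hh])
      have : v - x - (v - x') = x' - x := by ring
      rw [← hzeq, this]
      exact Finset.mem_union.2 (Or.inl (abs_sub_mem_diffSet hx' hx hxx'))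
  have hc2 := two_mul_filter_lt_card_add X
  have hFcard : F.card ≤ ((X ×ˢ X).filter (fun p => p.1 < p.2)).card + X.card := by
    calc F.card ≤ ((X ×ˢ X).filter (fun p => p.1 ≤ p.2)).card := Finset.card_image_le
      _ = _ := filter_le_card_eq X
  have hdXcard : (diffSet X).card ≤ ((X ×ˢ X).filter (fun p => p.1 < p.2)).card := by
    calc (diffSet X).card
        ≤ (((X ×ˢ X).filter (fun p => p.1 < p.2)).image (fun p => |p.1 - p.2|)).card :=
          Finset.card_le_card (diffSet_subset_image_lt X)
      _ ≤ _ := Finset.card_image_le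
  calc (diffSet B).card ≤ (diffSet X ∪ F).card := Finset.card_le_card hsubs
    _ ≤ (diffSet X).card + F.card := Finset.card_union_le _ _
    _ ≤ ((X ×ˢ X).filter (fun p => p.1 < p.2)).card
        + (((X ×ˢ X).filter (fun p => p.1 < p.2)).card + X.card) :=
        Nat.add_le_add hdXcard hFcard
    _ ≤ s ^ 2 := by rw [hXcard] at hc2 ⊢; omega
lemma main_lemma (u : ℕ) : ∀ (s : ℕ), 1 ≤ s → ∀ A : Finset ℝ, 2 ≤ A.card →
    (8 * s) ^ (2 ^ (u + 1)) * (diffSet A).card ^ (2 ^ (u + 1) - 1) ≤ A.card ^ (2 ^ (u + 1)) →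
    ∃ B ⊆ A, B.card = 2 ^ (u + 1) * s ∧ (diffSet B).card ≤ 3 ^ u * s ^ 2 + (3 ^ u - 1) / 2 := by
  induction u with
  | zero =>
    intro s hs A h2 h
    simp only [pow_one, pow_zero, one_mul] at h ⊢
    have h' : (8 * s) ^ 2 * (diffSet A).card ≤ A.card ^ 2 := by
      simpa using h
    obtain ⟨B, hBA, hBcard, hBd⟩ := base_case s hs A h2 h'
    exact ⟨B, hBA, hBcard, by simpa using hBd⟩
  | succ u ih =>
    intro s hs A h2 h
    set n := A.card with hn
    set D := (diffSet A).card with hD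
    set P := 2 ^ (u + 1) with hP
    have hP1 : 1 ≤ P := Nat.one_le_two_pow
    have h2P : 2 ^ (u + 1 + 1) = 2 * P := by rw [hP, pow_succ]; ring
    have hhyp : (8 * s) ^ (2 * P) * D ^ (2 * P - 1) ≤ n ^ (2 * P) := by
      rw [← h2P]; exact h
    have hD1 : 1 ≤ D := one_le_card_diffSet h2
    have h2Ppos : 2 * P ≠ 0 := by positivity
    have hn8s : 8 * s ≤ n := by
      have h1 : (8 * s) ^ (2 * P) * 1 ≤ (8 * s) ^ (2 * P) * D ^ (2 * P - 1) :=
        Nat.mul_le_mul_left _ (Nat.one_le_pow _ _ hD1)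
      rw [mul_one] at h1
      exact (pow_le_pow_iff_left₀ (Nat.zero_le _) (Nat.zero_le _) h2Ppos).1 (h1.trans hhyp)
    have hn8 : 8 ≤ n := le_trans (by omega) hn8s
    -- popular difference and alternating subset
    obtain ⟨δ, hδmem, hδpop⟩ := exists_popular_diff A h2
    have hδpos : 0 < δ := diffSet_pos hδmem
    set E := A.filter (fun a => a + δ ∈ A) with hE
    obtain ⟨M, hME, hEM, hMalt⟩ := exists_alternating δ hδpos E
    set n' := M.card with hn'
    have hMA : M ⊆ A := hME.trans (Finset.filter_subset _ _)
    have hnn : n * (n - 1) = n * n - n := by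
      cases n with
      | zero => simp
      | succ m => simp [Nat.succ_sub_one, Nat.mul_succ, Nat.succ_mul]
    have h4D : n * (n - 1) ≤ 4 * D * n' := by
      have : n * n - n ≤ D * (2 * E.card) := hδpop
      have h1 : D * (2 * E.card) ≤ D * (2 * (2 * n')) :=
        Nat.mul_le_mul_left _ (Nat.mul_le_mul_left _ hEM)
      calc n * (n - 1) = n * n - n := hnn
        _ ≤ D * (2 * E.card) := hδpop
        _ ≤ D * (2 * (2 * n')) := h1
        _ = 4 * D * n' := by ring
    have h7 : 7 * n ^ 2 ≤ 8 * (n * (n - 1)) := by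
      have h8n : 8 * n ≤ n * n := Nat.mul_le_mul_right _ hn8
      have hsq : n ^ 2 = n * n := sq n
      omega
    -- the set M is big enough and structured; verify the IH hypothesis for M
    set D' := (diffSet M).card with hD'
    have hD'le : D' ≤ D := Finset.card_le_card (diffSet_mono hMA)
    have hsq2 : (8 * s) ^ 2 * D ≤ n ^ 2 := by
      have h1 : ((8 * s) ^ 2 * D) ^ P ≤ (8 * s) ^ (2 * P) * D ^ (2 * P - 1) := by
        rw [mul_pow, ← pow_mul]
        have : D ^ P ≤ D ^ (2 * P - 1) := Nat.pow_le_pow_right hD1 (by omega)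
        calc (8 * s) ^ (2 * P) * D ^ P ≤ (8 * s) ^ (2 * P) * D ^ (2 * P - 1) :=
              Nat.mul_le_mul_left _ this
          _ = _ := by rw [mul_comm 2 P]
      have h2' : ((8 * s) ^ 2 * D) ^ P ≤ (n ^ 2) ^ P := by
        have hnp : (n ^ 2) ^ P = n ^ (2 * P) := by rw [← pow_mul]
        rw [hnp]
        exact le_trans h1 hhyp
      exact (pow_le_pow_iff_left₀ (Nat.zero_le _) (Nat.zero_le _) (by positivity)).1 h2'
    have hn'2 : 2 ≤ n' := by
      have hA : n * n ≥ 64 * s ^ 2 * D := by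
        have : (8 * s) ^ 2 * D = 64 * s ^ 2 * D := by ring
        rw [← sq n]; omega
      have hB2 : 2 * (n * (n - 1)) ≥ n * n := by
        have : 2 * n ≤ n * n := Nat.mul_le_mul_right _ (by omega)
        omega
      have hC : 8 * D * n' ≥ 8 * D * (8 * s ^ 2) := by
        have : 8 * D * n' = 2 * (4 * D * n') := by ring
        have h64 : 8 * D * (8 * s ^ 2) = 64 * s ^ 2 * D := by ring
        omega
      have hn's : 8 * s ^ 2 ≤ n' := Nat.le_of_mul_le_mul_left hC (by positivity)
      have : 8 * 1 ≤ 8 * s ^ 2 := by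
        have : 1 ≤ s ^ 2 := Nat.one_le_pow _ _ hs
        omega
      omega
    have hIHhyp : (8 * s) ^ P * D' ^ (P - 1) ≤ n' ^ P := by
      have hstep1 : (8 * s) ^ P * D ^ (P - 1) ≤ n' ^ P := by
        have hcancel : ((8 * s) ^ P * D ^ (P - 1)) * (8 ^ P * (4 * D) ^ P)
            ≤ n' ^ P * (8 ^ P * (4 * D) ^ P) := by
          have hLHS : ((8 * s) ^ P * D ^ (P - 1)) * (8 ^ P * (4 * D) ^ P)
              = (256 * s) ^ P * D ^ (2 * P - 1) := by
            have hDD : D ^ (P - 1) * D ^ P = D ^ (2 * P - 1) := by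
              rw [← pow_add]; congr 1; omega
            have h256 : ((256 : ℕ) * s) ^ P = (8 * s) ^ P * (8 ^ P * 4 ^ P) := by
              rw [← mul_pow, ← mul_pow]; congr 1; ring
            calc ((8 * s) ^ P * D ^ (P - 1)) * (8 ^ P * (4 * D) ^ P)
                = ((8 * s) ^ P * (8 ^ P * 4 ^ P)) * (D ^ (P - 1) * D ^ P) := by
                  rw [mul_pow]; ring
              _ = ((8 * s) ^ P * (8 ^ P * 4 ^ P)) * D ^ (2 * P - 1) := by rw [hDD]
              _ = (256 * s) ^ P * D ^ (2 * P - 1) := by rw [h256]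
          have hRHS : (8 * (n * (n - 1))) ^ P ≤ n' ^ P * (8 ^ P * (4 * D) ^ P) := by
            have : (8 * (n * (n - 1))) ^ P ≤ (8 * (4 * D * n')) ^ P :=
              Nat.pow_le_pow_left (by omega) _
            calc (8 * (n * (n - 1))) ^ P ≤ (8 * (4 * D * n')) ^ P := this
              _ = n' ^ P * (8 ^ P * (4 * D) ^ P) := by
                  rw [show 8 * (4 * D * n') = n' * (8 * (4 * D)) by ring, mul_pow, mul_pow]
          have hmid : (256 * s) ^ P * D ^ (2 * P - 1) ≤ (8 * (n * (n - 1))) ^ P := by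
            have hchain : (448 * (s * s)) ^ P * D ^ (2 * P - 1) ≤ (8 * (n * (n - 1))) ^ P := by
              have e1 : (7 * n ^ 2) ^ P ≤ (8 * (n * (n - 1))) ^ P := Nat.pow_le_pow_left h7 _
              have e2 : (7 * n ^ 2) ^ P = 7 ^ P * n ^ (2 * P) := by
                rw [mul_pow, ← pow_mul, mul_comm 2 P]
              have e3 : 7 ^ P * ((8 * s) ^ (2 * P) * D ^ (2 * P - 1)) ≤ 7 ^ P * n ^ (2 * P) :=
                Nat.mul_le_mul_left _ hhyp
              have e4 : 7 ^ P * ((8 * s) ^ (2 * P) * D ^ (2 * P - 1))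
                  = (448 * (s * s)) ^ P * D ^ (2 * P - 1) := by
                have : (8 * s) ^ (2 * P) = (64 * (s * s)) ^ P := by
                  rw [pow_mul]
                  congr 1; ring
                rw [this, ← mul_assoc, ← mul_pow]
                congr 2; ring
              rw [e4] at e3
              calc (448 * (s * s)) ^ P * D ^ (2 * P - 1) ≤ 7 ^ P * n ^ (2 * P) := e3
                _ = (7 * n ^ 2) ^ P := e2.symm
                _ ≤ (8 * (n * (n - 1))) ^ P := e1
            have hss : (256 * s) ^ P ≤ (448 * (s * s)) ^ P := by
              apply Nat.pow_le_pow_left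
              have : 256 * s ≤ 448 * s := by omega
              have h2s : 448 * s * 1 ≤ 448 * s * s := Nat.mul_le_mul_left _ hs
              calc 256 * s ≤ 448 * s := by omega
                _ = 448 * s * 1 := by ring
                _ ≤ 448 * s * s := h2s
                _ = 448 * (s * s) := by ring
            exact le_trans (Nat.mul_le_mul_right _ hss) hchain
          exact le_trans (le_of_eq hLHS) (le_trans hmid hRHS)
        exact Nat.le_of_mul_le_mul_right hcancel (by positivity)
      calc (8 * s) ^ P * D' ^ (P - 1) ≤ (8 * s) ^ P * D ^ (P - 1) :=
            Nat.mul_le_mul_left _ (Nat.pow_le_pow_left hD'le _)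
        _ ≤ n' ^ P := hstep1
    obtain ⟨B', hB'M, hB'card, hB'd⟩ := ih s hs M hn'2 hIHhyp
    -- double the structure
    set B := B' ∪ B'.image (fun b => b + δ) with hB
    have hB'A : B' ⊆ A := hB'M.trans hMA
    have hBA : B ⊆ A := by
      intro x hx
      rcases Finset.mem_union.1 hx with hx | hx
      · exact hB'A hx
      · obtain ⟨b, hb, rfl⟩ := Finset.mem_image.1 hx
        exact (Finset.mem_filter.1 (hME (hB'M hb))).2
    have hdisj : Disjoint B' (B'.image (fun b => b + δ)) := by
      rw [Finset.disjoint_left]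
      intro x hx hx'
      obtain ⟨b, hb, rfl⟩ := Finset.mem_image.1 hx'
      exact hMalt b (hB'M hb) (hB'M hx)
    have hBcard : B.card = 2 ^ (u + 1 + 1) * s := by
      rw [hB, Finset.card_union_of_disjoint hdisj,
        Finset.card_image_of_injective _ (add_left_injective δ), hB'card, h2P]
      ring
    refine ⟨B, hBA, hBcard, ?_⟩
    have hdouble : (diffSet B).card ≤ 3 * (diffSet B').card + 1 := by
      rw [hB]; exact card_diffSet_union_translate B' δ hδpos
    obtain ⟨a, ha3⟩ : ∃ a, 3 ^ u = 2 * a + 1 := by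
      obtain ⟨a, ha⟩ := Odd.pow (n := u) (Nat.odd_iff.2 (by norm_num) : Odd 3)
      exact ⟨a, by omega⟩
    have h3u1 : 3 ^ (u + 1) = 6 * a + 3 := by
      rw [pow_succ, ha3]; ring
    have hgoal : 3 * (3 ^ u * s ^ 2 + (3 ^ u - 1) / 2) + 1
        = 3 ^ (u + 1) * s ^ 2 + (3 ^ (u + 1) - 1) / 2 := by
      rw [ha3, h3u1]
      have e1 : (2 * a + 1 - 1) / 2 = a := by omega
      have e2 : (6 * a + 3 - 1) / 2 = 3 * a + 1 := by omega
      rw [e1, e2]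
      ring
    calc (diffSet B).card ≤ 3 * (diffSet B').card + 1 := hdouble
      _ ≤ 3 * (3 ^ u * s ^ 2 + (3 ^ u - 1) / 2) + 1 := by omega
      _ = 3 ^ (u + 1) * s ^ 2 + (3 ^ (u + 1) - 1) / 2 := hgoal

/-- For all positive integers `t` and `k` with `2^t ∣ k` and all `n > 1`, writing
`s = k/2^t`, we have `g(n, k, 3^{t−1}s² + (3^{t−1}+1)/2) > (n/(8s))^{1 + 1/(2^t − 1)}`. -/
theorem g_lower_bound (t k n : ℕ) (ht : 0 < t) (hdvd : 2 ^ t ∣ k) (hn : 1 < n) :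
    ENNReal.ofReal
        (((n : ℝ) / (8 * ((k / 2 ^ t : ℕ) : ℝ))) ^ ((1 : ℝ) + 1 / ((2 : ℝ) ^ t - 1)))
      < (g n k (3 ^ (t - 1) * (k / 2 ^ t) ^ 2 + (3 ^ (t - 1) + 1) / 2) : ℝ≥0∞) := by
  classical
  set s := k / 2 ^ t with hs
  set ℓ := 3 ^ (t - 1) * s ^ 2 + (3 ^ (t - 1) + 1) / 2 with hℓ
  set L : ℝ := ((n : ℝ) / (8 * (s : ℝ))) ^ ((1 : ℝ) + 1 / ((2 : ℝ) ^ t - 1)) with hL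
  have h3t : 1 ≤ 3 ^ (t - 1) := Nat.one_le_pow _ _ (by norm_num)
  have hℓ1 : 1 ≤ ℓ := by
    rw [hℓ]
    have : 1 ≤ (3 ^ (t - 1) + 1) / 2 := by omega
    omega
  have key : ∀ d ∈ {d : ℕ∞ | ∃ A : Finset ℝ, A.card = n ∧ HasLocalProperty A k ℓ ∧
      ((diffSet A).card : ℕ∞) = d}, ((⌊L⌋₊ + 1 : ℕ) : ℕ∞) ≤ d := by
    rintro d ⟨A, hcard, hprop, rfl⟩
    have h2A : 2 ≤ A.card := by omega
    rcases Nat.eq_zero_or_pos s with hs0 | hs1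
    · -- degenerate case k = 0 : the local property is contradictory
      exfalso
      have hk0 : k = 0 := by
        have hh := Nat.div_mul_cancel hdvd
        rw [← hh, ← hs, hs0, zero_mul]
      have hcontra := hprop ∅ (Finset.empty_subset A) (by simp [hk0])
      have hdempty : (diffSet (∅ : Finset ℝ)).card = 0 := by simp [diffSet]
      omega
    · -- main case
      have hcore : L < ((diffSet A).card : ℝ) := by
        by_contra hcon
        push_neg at hcon
        set D := (diffSet A).card with hD
        set x : ℝ := (n : ℝ) / (8 * (s : ℝ)) with hx
        have hx0 : (0 : ℝ) ≤ x := by positivity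
        have hs0R : (0 : ℝ) < (s : ℝ) := by exact_mod_cast hs1
        -- powers of two facts
        have hm2 : (2 : ℝ) ≤ (2 : ℝ) ^ t := by
          calc (2 : ℝ) = 2 ^ 1 := (pow_one 2).symm
            _ ≤ 2 ^ t := pow_le_pow_right₀ (by norm_num) ht
        have hm1 : (1 : ℝ) ≤ (2 : ℝ) ^ t - 1 := by linarith
        have hcast : ((2 ^ t - 1 : ℕ) : ℝ) = (2 : ℝ) ^ t - 1 := by
          have h1le : 1 ≤ 2 ^ t := Nat.one_le_two_pow
          push_cast [h1le]
          ring
        have hexp : ((1 : ℝ) + 1 / ((2 : ℝ) ^ t - 1)) * ((2 ^ t - 1 : ℕ) : ℝ)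
            = ((2 ^ t : ℕ) : ℝ) := by
          rw [hcast]
          have hne : (2 : ℝ) ^ t - 1 ≠ 0 := by linarith
          push_cast
          field_simp
          ring
        have hpow1 : ((D : ℝ)) ^ (2 ^ t - 1 : ℕ) ≤ (L) ^ (2 ^ t - 1 : ℕ) :=
          pow_le_pow_left₀ (by positivity) hcon _
        have hpow2 : (L : ℝ) ^ (2 ^ t - 1 : ℕ) = x ^ (2 ^ t : ℕ) := by
          rw [hL]
          rw [← Real.rpow_natCast (x ^ ((1 : ℝ) + 1 / ((2 : ℝ) ^ t - 1))) (2 ^ t - 1)]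
          rw [← Real.rpow_mul hx0, hexp, Real.rpow_natCast]
        have hxn : (8 * (s : ℝ)) * x = (n : ℝ) := by
          rw [hx]
          field_simp
        have hreal : ((8 * s : ℕ) : ℝ) ^ (2 ^ t : ℕ) * ((D : ℕ) : ℝ) ^ (2 ^ t - 1 : ℕ)
            ≤ ((n : ℕ) : ℝ) ^ (2 ^ t : ℕ) := by
          have : ((8 * s : ℕ) : ℝ) = 8 * (s : ℝ) := by push_cast; ring
          rw [this]
          calc (8 * (s : ℝ)) ^ (2 ^ t : ℕ) * ((D : ℕ) : ℝ) ^ (2 ^ t - 1 : ℕ)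
              ≤ (8 * (s : ℝ)) ^ (2 ^ t : ℕ) * x ^ (2 ^ t : ℕ) := by
                apply mul_le_mul_of_nonneg_left _ (by positivity)
                rw [← hpow2]
                exact hpow1
            _ = ((8 * (s : ℝ)) * x) ^ (2 ^ t : ℕ) := (mul_pow _ _ _).symm
            _ = ((n : ℕ) : ℝ) ^ (2 ^ t : ℕ) := by rw [hxn]
        have hnat : (8 * s) ^ (2 ^ t) * D ^ (2 ^ t - 1) ≤ n ^ (2 ^ t) := by
          exact_mod_cast hreal
        obtain ⟨u, rfl⟩ : ∃ u, t = u + 1 := ⟨t - 1, by omega⟩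
        obtain ⟨B, hBA, hBcard, hBd⟩ := main_lemma u s hs1 A h2A (by rw [hcard]; exact hnat)
        have hBk : B.card = k := by
          rw [hBcard, hs]
          exact Nat.mul_div_cancel' hdvd
        have hℓle := hprop B hBA hBk
        obtain ⟨a, ha3⟩ : ∃ a, 3 ^ u = 2 * a + 1 := by
          obtain ⟨a, ha⟩ := Odd.pow (n := u) (Nat.odd_iff.2 (by norm_num) : Odd 3)
          exact ⟨a, by omega⟩
        have hu1 : u + 1 - 1 = u := rfl
        rw [hℓ, hu1] at hℓle
        rw [ha3] at hℓle hBd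
        omega
      have hfl : ⌊L⌋₊ + 1 ≤ (diffSet A).card := by
        rcases le_or_gt 0 L with h0 | h0
        · have : ⌊L⌋₊ < (diffSet A).card := (Nat.floor_lt h0).2 hcore
          omega
        · have h1 : ⌊L⌋₊ = 0 := Nat.floor_of_nonpos h0.le
          have h2 : 1 ≤ (diffSet A).card := one_le_card_diffSet h2A
          omega
      exact_mod_cast hfl
  have hle : ((⌊L⌋₊ + 1 : ℕ) : ℕ∞) ≤ g n k ℓ := le_sInf key
  calc ENNReal.ofReal L < ((⌊L⌋₊ + 1 : ℕ) : ℝ≥0∞) := by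
        rw [← ENNReal.ofReal_natCast]
        refine (ENNReal.ofReal_lt_ofReal_iff ?_).2 ?_
        · have : (0 : ℝ) < ((⌊L⌋₊ + 1 : ℕ) : ℝ) := by positivity
          exact this
        · exact_mod_cast Nat.lt_floor_add_one L
    _ ≤ ((g n k ℓ : ℕ∞) : ℝ≥0∞) := by
        rw [show ((((⌊L⌋₊ + 1 : ℕ)) : ℝ≥0∞)) = (((⌊L⌋₊ + 1 : ℕ) : ℕ∞) : ℝ≥0∞) by simp]
        exact_mod_cast ENat.toENNReal_le.2 hle
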